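/- arXiv:2203.02637 — 4 statements merged into one kernel-verified Lean document; each statement's English description precedes it below -/
import Mathlib

section
/- Let f : G → H be a surjective group homomorphism with kernel K contained in the center Z(G), and suppose H is perfect. Then G = K·[G,G], the commutator subgroup [G,G] is a perfect group, and [G,G] is the unique maximal perfect subgroup of G. -/
/-! Since `f` maps `[G, G]` onto `[H, H] = H`, every element of `G` is a central element times an
element of `[G, G]`. Commutators do not see central factors, so `[G, G]` is generated by
commutators of its own elements, i.e. it is perfect; and any perfect `P` satisfies
`P = [P, P] ≤ [G, G]`. -/

open scoped commutatorElement

namespace Subgroup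

variable {G : Type*} [Group G]

theorem commutatorElement_mul_left_of_mem_center {k : G} (hk : k ∈ center G) (x y : G) :
    ⁅k * x, y⁆ = ⁅x, y⁆ := by
  calc ⁅k * x, y⁆ = k * (x * y * x⁻¹) * k⁻¹ * y⁻¹ := by group
    _ = ⁅x, y⁆ := by rw [← mem_center_iff.mp hk]; group

theorem commutatorElement_mul_right_of_mem_center {k : G} (hk : k ∈ center G) (x y : G) :
    ⁅x, k * y⁆ = ⁅x, y⁆ := by
  rw [← inv_inj, commutatorElement_inv, commutatorElement_inv,
    commutatorElement_mul_left_of_mem_center hk]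

theorem commutator_eq_of_forall_eq_center_mul {N : Subgroup G}
    (h : ∀ g : G, ∃ k ∈ center G, ∃ x ∈ N, g = k * x) : ⁅N, N⁆ = _root_.commutator G := by
  refine le_antisymm (commutator_mono le_top le_top) ?_
  rw [_root_.commutator_def, commutator_le]
  rintro g₁ - g₂ -
  obtain ⟨k₁, hk₁, x₁, hx₁, rfl⟩ := h g₁
  obtain ⟨k₂, hk₂, x₂, hx₂, rfl⟩ := h g₂
  rw [commutatorElement_mul_left_of_mem_center hk₁,
    commutatorElement_mul_right_of_mem_center hk₂]
  exact commutator_mem_commutator hx₁ hx₂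

theorem le_commutator_of_isPerfect (P : Subgroup G) [Group.IsPerfect P] :
    P ≤ _root_.commutator G :=
  P.commutator_eq_self.symm.le.trans (commutator_mono le_top le_top)

end Subgroup

namespace MonoidHom

variable {G H : Type*} [Group G] [Group H]

theorem map_commutator_of_surjective (f : G →* H) (hf : Function.Surjective f) :
    (commutator G).map f = commutator H := by
  rw [map_commutator_eq, range_eq_top_of_surjective f hf, commutator_def]

theorem exists_mem_ker_mul_of_map_eq_top (f : G →* H) {N : Subgroup G} (hN : N.map f = ⊤)
    (g : G) : ∃ k ∈ f.ker, ∃ x ∈ N, g = k * x := by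
  obtain ⟨x, hx, hfx⟩ : f g ∈ N.map f := hN ▸ Subgroup.mem_top _
  exact ⟨g * x⁻¹, by simp [hfx], x, hx, by group⟩

end MonoidHom

theorem stmt3 {G H : Type*} [Group G] [Group H] (f : G →* H)
    (hf : Function.Surjective f) (hker : f.ker ≤ Subgroup.center G)
    (hH : commutator H = ⊤) :
    (∀ g : G, ∃ k ∈ f.ker, ∃ x ∈ commutator G, g = k * x) ∧
    commutator ↥(commutator G) = ⊤ ∧
    (∀ P : Subgroup G, commutator ↥P = ⊤ → P ≤ commutator G) := by
  have decomp : ∀ g : G, ∃ k ∈ f.ker, ∃ x ∈ commutator G, g = k * x :=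
    f.exists_mem_ker_mul_of_map_eq_top ((f.map_commutator_of_surjective hf).trans hH)
  refine ⟨decomp, ?_, fun P hP ↦ ?_⟩
  · rw [← Group.isPerfect_def, Subgroup.isPerfect_iff]
    refine Subgroup.commutator_eq_of_forall_eq_center_mul fun g ↦ ?_
    obtain ⟨k, hk, x, hx, rfl⟩ := decomp g
    exact ⟨k, hker hk, x, hx, rfl⟩
  · have := Group.isPerfect_def.mpr hP
    exact Subgroup.le_commutator_of_isPerfect P
end

section
/- Let G be a group with a normal subgroup N and a finite subgroup F = {e, x₁, …, xₙ} such that G = FN. Suppose N is abelian. Then [G,N], the subgroup generated by commutators of elements of G with elements of N, equals the product of subgroups [x₁,N]₁ ⋯ [xₙ,N]₁, where [xᵢ,N]₁ = {[xᵢ,n] : n ∈ N}; moreover [G,G] = [F,F]·[G,N]. -/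
/-!
Because `N` is abelian, `n ↦ x⁻¹ n⁻¹ x n` is a homomorphism `N → G`; its image `[x,N]₁` lies in `N`
and only depends on the coset `xN`. These images pairwise commute, so their product is the subgroup
they generate, and that is `[G,N]` because every coset of `N` meets `F`. Modulo `[G,N]` the subgroup
`N` is central, hence `[fm, f'm'] ≡ [f, f']`, which gives `[G,G] = [F,F][G,N]`.
-/

open scoped Pointwise commutatorElement

theorem commutatorElement_mul_mul_of_mem_center {Q : Type*} [Group Q] (a b c d : Q)
    (hb : b ∈ Subgroup.center Q) (hd : d ∈ Subgroup.center Q) : ⁅a * b, c * d⁆ = ⁅a, c⁆ := by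
  have hb' : b * (c * d) * b⁻¹ = c * d := by
    rw [← Subgroup.mem_center_iff.1 hb, mul_inv_cancel_right]
  have hd' : d * a⁻¹ * d⁻¹ = a⁻¹ := by
    rw [← Subgroup.mem_center_iff.1 hd, mul_inv_cancel_right]
  calc ⁅a * b, c * d⁆ = a * (b * (c * d) * b⁻¹) * a⁻¹ * d⁻¹ * c⁻¹ := by group
    _ = a * c * (d * a⁻¹ * d⁻¹) * c⁻¹ := by rw [hb']; group
    _ = ⁅a, c⁆ := by rw [hd', commutatorElement_def]

namespace Subgroup

section

variable {G : Type*} [Group G]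

theorem coe_sup_eq_mul_of_le_centralizer {A B : Subgroup G} (h : A ≤ centralizer B) :
    ((A ⊔ B : Subgroup G) : Set G) = A * B :=
  coe_mul_of_left_le_normalizer_right A B (h.trans (centralizer_le_normalizer _))

theorem prod_map_coe_eq_coe_biSup {ι : Type*} {K : ι → Subgroup G}
    (hK : ∀ i j, K i ≤ centralizer (K j)) (l : List ι) :
    (l.map fun i => (K i : Set G)).prod = ((⨆ i ∈ l, K i : Subgroup G) : Set G) := by
  induction l with
  | nil => simp [Set.singleton_one]
  | cons x l ih =>
    have hx : K x ≤ centralizer ((⨆ i ∈ l, K i : Subgroup G) : Set G) :=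
      le_centralizer_iff.2 (iSup₂_le fun i _ => hK i x)
    have hsup : (⨆ i ∈ x :: l, K i) = K x ⊔ ⨆ i ∈ l, K i := by
      simp [iSup_or, iSup_sup_eq]
    rw [List.map_cons, List.prod_cons, ih, hsup, coe_sup_eq_mul_of_le_centralizer hx]

theorem closure_inv_mul_inv_mul_mul_eq_commutator (H₁ H₂ : Subgroup G) :
    closure {c | ∃ a ∈ H₁, ∃ b ∈ H₂, c = a⁻¹ * b⁻¹ * a * b} = ⁅H₁, H₂⁆ := by
  rw [commutator_def]
  congr 1
  ext c
  constructor
  · rintro ⟨a, ha, b, hb, rfl⟩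
    exact ⟨a⁻¹, inv_mem ha, b⁻¹, inv_mem hb, by simp [commutatorElement_def]⟩
  · rintro ⟨a, ha, b, hb, rfl⟩
    exact ⟨a⁻¹, inv_mem ha, b⁻¹, inv_mem hb, by simp [commutatorElement_def]⟩

theorem mk_mem_center_of_commutator_le {N K : Subgroup G} [K.Normal] (h : ⁅N, ⊤⁆ ≤ K)
    {n : G} (hn : n ∈ N) : (n : G ⧸ K) ∈ center (G ⧸ K) := by
  refine mem_center_iff.2 fun q => ?_
  induction q using QuotientGroup.induction_on with
  | H y =>
    rw [eq_comm, ← commutatorElement_eq_one_iff_mul_comm, ← QuotientGroup.mk'_apply,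
      ← QuotientGroup.mk'_apply, ← map_commutatorElement, QuotientGroup.mk'_apply,
      QuotientGroup.eq_one_iff]
    exact h (commutator_mem_commutator hn (mem_top y))

theorem commutator_eq_sup_of_forall_eq_mul (H N : Subgroup G) [N.Normal]
    (hHN : ∀ g : G, ∃ f ∈ H, ∃ n ∈ N, g = f * n) :
    _root_.commutator G = ⁅H, H⁆ ⊔ ⁅(⊤ : Subgroup G), N⁆ := by
  refine le_antisymm ?_ (_root_.commutator_def G ▸ sup_le (commutator_mono le_top le_top)
    (commutator_mono le_top le_top))
  rw [_root_.commutator_def, commutator_le]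
  rintro g - g' -
  obtain ⟨f, hf, m, hm, rfl⟩ := hHN g
  obtain ⟨f', hf', m', hm', rfl⟩ := hHN g'
  have hcentral {n : G} (hn : n ∈ N) :
      (n : G ⧸ ⁅(⊤ : Subgroup G), N⁆) ∈ center (G ⧸ ⁅(⊤ : Subgroup G), N⁆) :=
    mk_mem_center_of_commutator_le (commutator_comm N ⊤).le hn
  have hmod : ⁅f, f'⁆⁻¹ * ⁅f * m, f' * m'⁆ ∈ ⁅(⊤ : Subgroup G), N⁆ := by
    rw [← QuotientGroup.eq, ← QuotientGroup.mk'_apply, ← QuotientGroup.mk'_apply,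
      map_commutatorElement, map_commutatorElement, map_mul, map_mul]
    exact (commutatorElement_mul_mul_of_mem_center _ _ _ _ (hcentral hm) (hcentral hm')).symm
  rw [← mul_inv_cancel_left ⁅f, f'⁆ ⁅f * m, f' * m'⁆]
  exact mul_mem (mem_sup_left (commutator_mem_commutator hf hf')) (mem_sup_right hmod)

end

section

variable {G : Type*} [Group G] (N : Subgroup G) [hN : N.Normal] [IsMulCommutative N]

/-- `n ↦ [x, n]` with the paper's convention `[x, n] = x⁻¹ n⁻¹ x n`, which is `⁅x⁻¹, n⁻¹⁆` in
Mathlib's. -/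
def commutatorLeftHom (x : G) : N →* G :=
  MonoidHom.mk' (fun n => x⁻¹ * (n : G)⁻¹ * x * n) fun a b => by
    have hv : x⁻¹ * (b : G)⁻¹ * x ∈ N := hN.conj_mem' _ (inv_mem b.2) x
    have hw : x⁻¹ * (a : G)⁻¹ * x * a ∈ N := mul_mem (hN.conj_mem' _ (inv_mem a.2) x) a.2
    calc x⁻¹ * ((a * b : N) : G)⁻¹ * x * (a * b : N)
        = (x⁻¹ * (b : G)⁻¹ * x) * (x⁻¹ * (a : G)⁻¹ * x * a) * b := by push_cast; group
      _ = (x⁻¹ * (a : G)⁻¹ * x * a) * (x⁻¹ * (b : G)⁻¹ * x) * b := by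
        rw [setLike_mul_comm hv hw]
      _ = x⁻¹ * (a : G)⁻¹ * x * a * (x⁻¹ * (b : G)⁻¹ * x * b) := by group

variable {N}

@[simp]
theorem commutatorLeftHom_apply (x : G) (n : N) :
    N.commutatorLeftHom x n = x⁻¹ * (n : G)⁻¹ * x * n :=
  rfl

theorem coe_range_commutatorLeftHom (x : G) :
    ((N.commutatorLeftHom x).range : Set G) = {c | ∃ n ∈ N, c = x⁻¹ * n⁻¹ * x * n} := by
  ext c
  simp [eq_comm]

theorem range_commutatorLeftHom_le (x : G) : (N.commutatorLeftHom x).range ≤ N := by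
  rintro _ ⟨n, rfl⟩
  exact mul_mem (hN.conj_mem' _ (inv_mem n.2) x) n.2

theorem commutatorLeftHom_one : N.commutatorLeftHom 1 = 1 := by
  ext n
  simp

theorem commutatorLeftHom_mul_right (x : G) {m : G} (hm : m ∈ N) :
    N.commutatorLeftHom (x * m) = N.commutatorLeftHom x := by
  ext n
  have hc : m⁻¹ * (x⁻¹ * (n : G)⁻¹ * x) = (x⁻¹ * (n : G)⁻¹ * x) * m⁻¹ :=
    setLike_mul_comm (inv_mem hm) (hN.conj_mem' _ (inv_mem n.2) x)
  calc (x * m)⁻¹ * (n : G)⁻¹ * (x * m) * n = m⁻¹ * (x⁻¹ * (n : G)⁻¹ * x) * m * n := by group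
    _ = x⁻¹ * (n : G)⁻¹ * x * n := by rw [hc]; group

theorem commutator_top_eq_biSup_range {s : Set G} (hs : ∀ g : G, ∃ f ∈ s, ∃ m ∈ N, g = f * m) :
    ⁅(⊤ : Subgroup G), N⁆ = ⨆ x ∈ s, (N.commutatorLeftHom x).range := by
  refine le_antisymm ?_ (iSup₂_le fun x _ => ?_)
  · rw [commutator_le]
    rintro g - n hn
    obtain ⟨f, hf, m, hm, hfm⟩ := hs g⁻¹
    have hgn : ⁅g, n⁆ = N.commutatorLeftHom f ⟨n⁻¹, inv_mem hn⟩ := by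
      rw [← commutatorLeftHom_mul_right f hm, ← hfm, commutatorLeftHom_apply,
        commutatorElement_def]
      group
    rw [hgn]
    exact le_biSup (fun x => (N.commutatorLeftHom x).range) hf ⟨_, rfl⟩
  · rintro _ ⟨n, rfl⟩
    rw [commutatorLeftHom_apply, show x⁻¹ * (n : G)⁻¹ * x * n = ⁅x⁻¹, (n : G)⁻¹⁆ by
      rw [commutatorElement_def]; group]
    exact commutator_mem_commutator (mem_top _) (inv_mem n.2)

end

end Subgroup

open Subgroup in
theorem stmt8 {G : Type*} [Group G] (N F : Subgroup G) [N.Normal]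
    (xs : List G)
    (hF : (F : Set G) = insert (1 : G) {x : G | x ∈ xs})
    (hFN : ∀ g : G, ∃ f ∈ F, ∃ n ∈ N, g = f * n)
    (hNab : ∀ a ∈ N, ∀ b ∈ N, a * b = b * a) :
    ((Subgroup.closure {c : G | ∃ g : G, ∃ n ∈ N, c = g⁻¹ * n⁻¹ * g * n} : Subgroup G) :
        Set G) =
      (xs.map (fun x => ({c : G | ∃ n ∈ N, c = x⁻¹ * n⁻¹ * x * n} : Set G))).prod ∧
    (commutator G : Set G) =
      ((Subgroup.closure {c : G | ∃ a ∈ F, ∃ b ∈ F, c = a⁻¹ * b⁻¹ * a * b} : Subgroup G) :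
          Set G) *
      ((Subgroup.closure {c : G | ∃ g : G, ∃ n ∈ N, c = g⁻¹ * n⁻¹ * g * n} : Subgroup G) :
          Set G) := by
  have : IsMulCommutative N := .of_setLike_mul_comm hNab
  have hGN : closure {c : G | ∃ g : G, ∃ n ∈ N, c = g⁻¹ * n⁻¹ * g * n} =
      ⁅(⊤ : Subgroup G), N⁆ := by
    simpa using closure_inv_mul_inv_mul_mul_eq_commutator ⊤ N
  rw [closure_inv_mul_inv_mul_mul_eq_commutator F F, hGN]
  refine ⟨?_, by rw [commutator_eq_sup_of_forall_eq_mul F N hFN, mul_normal]⟩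
  have hK (x y : G) :
      (N.commutatorLeftHom x).range ≤ centralizer (N.commutatorLeftHom y).range :=
    le_trans (range_commutatorLeftHom_le x)
      (le_trans (le_centralizer N) (centralizer_le (range_commutatorLeftHom_le y)))
  simp only [← coe_range_commutatorLeftHom]
  rw [prod_map_coe_eq_coe_biSup hK, commutator_top_eq_biSup_range (s := F) hFN, hF, iSup_insert,
    commutatorLeftHom_one, MonoidHom.range_one, bot_sup_eq]
  rfl
end

section
/- Let G be a group with a normal abelian subgroup N such that N is uniquely divisible (divisible and torsion-free) and the quotient G/N is finite. Then N has a complement in G: there exists a subgroup F of G with F ∩ N = {e} and G = NF (so G is a semidirect product of N and F). -/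
/-!
This is the abelian case of Schur–Zassenhaus, where coprimality of `|H|` and `n = [G : H]` is only
used through bijectivity of `h ↦ h ^ n` on `H`. Two transversals of `H` differ by an element of
`H` (the product of their pointwise quotients), and translating a transversal by `h ∈ H` multiplies
that difference by `h ^ n`. Hence `H` acts freely and transitively on transversals modulo trivial
difference, and the stabilizer in `G` of one class is a complement of `H`.
-/

namespace Subgroup

open MulOpposite Subgroup.leftTransversals
open scoped IsMulCommutative

variable {G : Type*} [Group G] {H : Subgroup G} [IsMulCommutative H] [FiniteIndex H] [Normal H]

theorem eq_one_of_smul_eq_self_of_injective_pow_index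
    (hH : Function.Injective fun h : H => h ^ H.index) (α : H.QuotientDiff) (h : H)
    (hα : h • α = α) : h = 1 := by
  induction α using Quotient.inductionOn' with
  | h α =>
    refine hH ?_
    calc h ^ H.index = diff (MonoidHom.id H) (op ((h⁻¹ : H) : G) • α) α := by
          rw [← diff_inv, smul_diff', diff_self, one_mul, inv_pow, inv_inv]
      _ = 1 ^ H.index := (Quotient.exact' hα).trans (one_pow H.index).symm

theorem exists_smul_eq_of_surjective_pow_index
    (hH : Function.Surjective fun h : H => h ^ H.index) (α β : H.QuotientDiff) :
    ∃ h : H, h • α = β := by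
  induction α using Quotient.inductionOn' with
  | h α =>
  induction β using Quotient.inductionOn' with
  | h β =>
    obtain ⟨h, hh : h ^ H.index = _⟩ := hH (diff (MonoidHom.id H) β α)
    refine ⟨h, Quotient.sound' ?_⟩
    change diff (MonoidHom.id H) (op ((h⁻¹ : H) : G) • α) β = 1
    rw [← diff_inv, smul_diff', inv_pow, hh, mul_inv_cancel, inv_one]

theorem exists_right_complement'_of_bijective_pow_index
    (hH : Function.Bijective fun h : H => h ^ H.index) : ∃ K : Subgroup G, IsComplement' H K := by
  obtain ⟨α⟩ : Nonempty H.QuotientDiff := inferInstance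
  exact ⟨_, isComplement'_stabilizer α (eq_one_of_smul_eq_self_of_injective_pow_index hH.1 α)
    fun g => exists_smul_eq_of_surjective_pow_index hH.2 (g • α) α⟩

end Subgroup

theorem stmt9 {G : Type*} [Group G] (N : Subgroup G) [N.Normal]
    (hab : ∀ a ∈ N, ∀ b ∈ N, a * b = b * a)
    (hdiv : ∀ n : ℕ, 0 < n → Function.Bijective (fun x : N => x ^ n))
    (hfin : Finite (G ⧸ N)) :
    ∃ F : Subgroup G, F ⊓ N = ⊥ ∧ ∀ g : G, ∃ n ∈ N, ∃ f ∈ F, g = n * f := by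
  have : IsMulCommutative N := ⟨⟨fun a b => Subtype.ext (hab a a.2 b b.2)⟩⟩
  have : N.FiniteIndex := Subgroup.finiteIndex_of_finite_quotient
  obtain ⟨F, hF⟩ := Subgroup.exists_right_complement'_of_bijective_pow_index
    (hdiv N.index (Nat.pos_of_ne_zero Subgroup.FiniteIndex.index_ne_zero))
  refine ⟨F, inf_comm N F ▸ hF.disjoint.eq_bot, fun g => ?_⟩
  obtain ⟨⟨n, f⟩, hnf⟩ := hF.2 g
  exact ⟨n, n.2, f, f.2, hnf.symm⟩
end

section
/- Let G be a group with a normal abelian uniquely divisible subgroup N such that G/N is finite. Then any two complements of N in G are conjugate: if F₁, F₂ ≤ G satisfy Fᵢ ∩ N = {e} and G = NFᵢ for i = 1,2, then there exists g ∈ G (in fact g ∈ N) with F₂ = gF₁g⁻¹. -/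
/-!
Write each `y ∈ F₁` as `y = δ(y) k(y)` with `δ(y) ∈ N` and `k(y) ∈ F₂`. Then `δ` is a 1-cocycle of
`F₁` with values in `N`, for the action by conjugation. As `F₁ ≅ G ⧸ N` is finite and `|F₁|`-th
roots exist and are unique in `N`, averaging over `F₁` shows that `δ` is a coboundary,
`δ(y) = y x y⁻¹ x⁻¹` with `x ∈ N`. Then `k(y) = x y x⁻¹`, so `x F₁ x⁻¹ ≤ F₂`. Both are complements
of `N`, so they are equal.
-/

open groupCohomology

theorem isMulCoboundary₁_of_bijective_pow_card {F M : Type*} [Group F] [Finite F] [CommGroup M]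
    [MulDistribMulAction F M] (hpow : Function.Bijective fun m : M => m ^ Nat.card F)
    {f : F → M} (hf : IsMulCocycle₁ f) : IsMulCoboundary₁ f := by
  classical
  have := Fintype.ofFinite F
  set b := ∏ y, f y
  have hb (g : F) : g • b = b / f g ^ Nat.card F := by
    have : b = g • b * f g ^ Nat.card F := calc
      b = ∏ y, f (g * y) := (Equiv.prod_comp (Equiv.mulLeft g) f).symm
      _ = ∏ y, (g • f y * f g) := Finset.prod_congr rfl fun y _ => hf g y
      _ = g • b * f g ^ Nat.card F := by
        rw [Finset.prod_mul_distrib, Finset.smul_prod', Finset.prod_const, Finset.card_univ,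
          Nat.card_eq_fintype_card]
    rw [eq_div_iff_mul_eq', ← this]
  obtain ⟨x, hx⟩ := hpow.2 b⁻¹
  refine ⟨x, fun g => hpow.1 ?_⟩
  dsimp only at hx ⊢
  rw [div_pow, ← smul_pow', hx, smul_inv', hb, inv_div, div_inv_eq_mul, div_mul_cancel]

namespace Subgroup

variable {G : Type*} [Group G] {N K : Subgroup G}

theorem isComplement'_of_inf_eq_bot (h : K ⊓ N = ⊥) (h' : ∀ g : G, ∃ n ∈ N, ∃ k ∈ K, g = n * k) :
    N.IsComplement' K :=
  isComplement'_of_disjoint_and_mul_eq_univ (by rwa [disjoint_iff, inf_comm])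
    (Set.eq_univ_of_forall fun g => by
      obtain ⟨n, hn, k, hk, rfl⟩ := h' g
      exact Set.mul_mem_mul hn hk)

theorem injOn_mk_of_disjoint (h : Disjoint N K) :
    Set.InjOn (QuotientGroup.mk : G → G ⧸ N) K := by
  intro x hx y hy hxy
  rw [QuotientGroup.eq] at hxy
  exact inv_mul_eq_one.mp (disjoint_def.mp h hxy (K.mul_mem (K.inv_mem hx) hy))

theorem finite_of_disjoint [Finite (G ⧸ N)] (h : Disjoint N K) : Finite K :=
  Finite.of_injective _ (Set.injOn_iff_injective.mp (injOn_mk_of_disjoint h))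

noncomputable def IsComplement'.normalPart (hK : N.IsComplement' K) (g : G) : N :=
  ⟨(hK.equiv g).1, (hK.equiv g).1.2⟩

theorem IsComplement'.normalPart_mul_left (hK : N.IsComplement' K) (n : N) (g : G) :
    hK.normalPart (n * g) = n * hK.normalPart g :=
  Subtype.ext <| by simp only [normalPart, IsComplement.equiv_mul_left_of_mem hK n.2]; rfl

theorem IsComplement'.normalPart_mul_right (hK : N.IsComplement' K) (g : G) {k : G} (hk : k ∈ K) :
    hK.normalPart (g * k) = hK.normalPart g := by
  simp [normalPart, IsComplement.equiv_mul_right_of_mem hK hk]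

theorem IsComplement'.normalPart_inv_mul_mem (hK : N.IsComplement' K) (g : G) :
    (hK.normalPart g : G)⁻¹ * g ∈ K := by
  rw [normalPart, coe_mk, ← IsComplement.equiv_snd_eq_inv_mul]
  exact (hK.equiv g).2.2

section Conj

variable (N) [N.Normal]

noncomputable abbrev normalConjMulDistribMulAction : MulDistribMulAction G N :=
  MulDistribMulAction.compHom (A := N) (MulAut.conjNormal (H := N))

attribute [local instance] normalConjMulDistribMulAction

variable {N}

theorem coe_conj_smul (g : G) (n : N) : ((g • n : N) : G) = g * n * g⁻¹ :=
  MulAut.conjNormal_apply g n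

open scoped IsMulCommutative in
theorem IsComplement'.isMulCocycle₁_normalPart [IsMulCommutative N] (hK : N.IsComplement' K) :
    IsMulCocycle₁ hK.normalPart := by
  intro g h
  set b := hK.normalPart h
  calc hK.normalPart (g * h) = hK.normalPart (g * b * ((b : G)⁻¹ * h)) := by group
    _ = hK.normalPart ((g • b : N) * g) := by
      rw [hK.normalPart_mul_right _ (hK.normalPart_inv_mul_mem h), coe_conj_smul,
        inv_mul_cancel_right]
    _ = g • b * hK.normalPart g := hK.normalPart_mul_left _ _

theorem IsComplement'.conj_mem_of_smul_div_eq (hK : N.IsComplement' K) {x : N} {g : G}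
    (h : g • x / x = hK.normalPart g) : (x : G) * g * (x : G)⁻¹ ∈ K := by
  have := hK.normalPart_inv_mul_mem g
  rw [← h, coe_div, coe_conj_smul, div_eq_mul_inv] at this
  convert this using 1
  group

open scoped IsMulCommutative in
theorem IsComplement'.exists_conj_mem_of_finite [IsMulCommutative N] (hK : N.IsComplement' K)
    (F : Subgroup G) [Finite F] (hpow : Function.Bijective fun n : N => n ^ Nat.card F) :
    ∃ x : N, ∀ y ∈ F, (x : G) * y * (x : G)⁻¹ ∈ K := by
  obtain ⟨x, hx⟩ := isMulCoboundary₁_of_bijective_pow_card hpow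
    (f := fun y : F => hK.normalPart y) fun a b => hK.isMulCocycle₁_normalPart a b
  exact ⟨x, fun y hy => hK.conj_mem_of_smul_div_eq (hx ⟨y, hy⟩)⟩

end Conj

end Subgroup

theorem stmt10 {G : Type*} [Group G] (N : Subgroup G) [N.Normal]
    (hab : ∀ a ∈ N, ∀ b ∈ N, a * b = b * a)
    (hdiv : ∀ n : ℕ, 0 < n → Function.Bijective (fun x : N => x ^ n))
    (hfin : Finite (G ⧸ N))
    (F₁ F₂ : Subgroup G)
    (h1 : F₁ ⊓ N = ⊥) (h1' : ∀ g : G, ∃ n ∈ N, ∃ f ∈ F₁, g = n * f)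
    (h2 : F₂ ⊓ N = ⊥) (h2' : ∀ g : G, ∃ n ∈ N, ∃ f ∈ F₂, g = n * f) :
    ∃ g ∈ N, ∀ x : G, x ∈ F₂ ↔ ∃ y ∈ F₁, x = g * y * g⁻¹ := by
  have : IsMulCommutative N := ⟨⟨fun a b => Subtype.ext (hab _ a.2 _ b.2)⟩⟩
  have hK : N.IsComplement' F₂ := Subgroup.isComplement'_of_inf_eq_bot h2 h2'
  have : Finite F₁ := Subgroup.finite_of_disjoint (by rwa [disjoint_iff, inf_comm])
  obtain ⟨x, hx⟩ := hK.exists_conj_mem_of_finite F₁ (hdiv _ Nat.card_pos)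
  refine ⟨x, x.2, fun z => ⟨fun hz => ?_, ?_⟩⟩
  · obtain ⟨n, hn, y, hy, rfl⟩ := h1' z
    refine ⟨y, hy, Subgroup.injOn_mk_of_disjoint hK.disjoint hz (hx y hy) ?_⟩
    simp [(QuotientGroup.eq_one_iff _).mpr hn, (QuotientGroup.eq_one_iff _).mpr x.2]
  · rintro ⟨y, hy, rfl⟩
    exact hx y hy
end
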